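/- arXiv:1511.00394 — 7 statements merged into one kernel-verified Lean document; each statement's English description precedes it below -/
import Mathlib

section
/- A quadratic function x ↦ xᵀQx on ℝⁿ (Q symmetric) is submodular if and only if all off-diagonal entries of Q are nonpositive. -/
open Matrix

/-!
Write `B(u, v) = u ⬝ᵥ Q *ᵥ v`. Since `x ⊓ y + x ⊔ y = x + y`, polarisation shows that the
submodularity defect `xᵀQx + yᵀQy - (x ⊓ y)ᵀQ(x ⊓ y) - (x ⊔ y)ᵀQ(x ⊔ y)` equals
`-2 B(x - x ⊓ y, y - x ⊓ y) = -2 B((x - y)⁺, (x - y)⁻)`. The vectors `(x - y)⁺` and `(x - y)⁻` are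
nonnegative with disjoint supports, so only off-diagonal entries of `Q` enter `B`; conversely
`x = eᵢ`, `y = eⱼ` gives `B = Q i j`.
-/

section LatticeOrderedGroup

variable {α : Type*} [AddCommGroup α] [Lattice α] [AddLeftMono α]

lemma sub_inf_eq_posPart_sub (a b : α) : a - a ⊓ b = (a - b)⁺ := by
  rw [inf_eq_sub_posPart_sub, sub_sub_cancel]

lemma sub_inf_eq_negPart_sub (a b : α) : b - a ⊓ b = (a - b)⁻ := by
  rw [inf_comm, sub_inf_eq_posPart_sub, ← neg_sub, posPart_neg]

end LatticeOrderedGroup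

lemma posPart_mul_negPart {R : Type*} [Ring R] [LinearOrder R] [IsOrderedRing R] (a : R) :
    a⁺ * a⁻ = 0 := by
  rcases le_total a 0 with h | h
  · rw [posPart_eq_zero.2 h, zero_mul]
  · rw [negPart_eq_zero.2 h, mul_zero]

lemma Pi.single_inf_single_of_ne {ι R : Type*} [DecidableEq ι] [Zero R] [Lattice R] {i j : ι}
    (hij : i ≠ j) {a b : R} (ha : 0 ≤ a) (hb : 0 ≤ b) :
    (Pi.single i a : ι → R) ⊓ Pi.single j b = 0 := by
  ext k
  simp only [Pi.inf_apply, Pi.single_apply, Pi.zero_apply]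
  split_ifs <;> simp_all

namespace Matrix

variable {ι R : Type*} [Fintype ι]

section CommSemiring

variable [CommSemiring R] {Q : Matrix ι ι R}

lemma IsSymm.dotProduct_mulVec_comm (hQ : Q.IsSymm) (u v : ι → R) :
    u ⬝ᵥ Q *ᵥ v = v ⬝ᵥ Q *ᵥ u := by
  rw [dotProduct_mulVec, ← mulVec_transpose, hQ.eq, dotProduct_comm]

lemma IsSymm.dotProduct_mulVec_add_add (hQ : Q.IsSymm) (a u v : ι → R) :
    a ⬝ᵥ Q *ᵥ a + (a + u + v) ⬝ᵥ Q *ᵥ (a + u + v) =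
      (a + u) ⬝ᵥ Q *ᵥ (a + u) + (a + v) ⬝ᵥ Q *ᵥ (a + v) + 2 * (u ⬝ᵥ Q *ᵥ v) := by
  simp only [mulVec_add, add_dotProduct, dotProduct_add, hQ.dotProduct_mulVec_comm v u,
    hQ.dotProduct_mulVec_comm u a, hQ.dotProduct_mulVec_comm v a]
  ring

end CommSemiring

variable [CommRing R] [LinearOrder R] {Q : Matrix ι ι R}

lemma IsSymm.dotProduct_mulVec_inf_add_sup [IsOrderedRing R] (hQ : Q.IsSymm) (x y : ι → R) :
    (x ⊓ y) ⬝ᵥ Q *ᵥ (x ⊓ y) + (x ⊔ y) ⬝ᵥ Q *ᵥ (x ⊔ y) =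
      x ⬝ᵥ Q *ᵥ x + y ⬝ᵥ Q *ᵥ y + 2 * ((x - x ⊓ y) ⬝ᵥ Q *ᵥ (y - x ⊓ y)) := by
  have hsup : x ⊓ y + (x - x ⊓ y) + (y - x ⊓ y) = x ⊔ y := by
    rw [← add_right_inj (x ⊓ y), inf_add_sup]
    abel
  have := hQ.dotProduct_mulVec_add_add (x ⊓ y) (x - x ⊓ y) (y - x ⊓ y)
  rwa [hsup, add_sub_cancel, add_sub_cancel] at this

lemma IsSymm.dotProduct_mulVec_inf_add_sup_le_iff [IsStrictOrderedRing R] (hQ : Q.IsSymm)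
    (x y : ι → R) :
    (x ⊓ y) ⬝ᵥ Q *ᵥ (x ⊓ y) + (x ⊔ y) ⬝ᵥ Q *ᵥ (x ⊔ y) ≤ x ⬝ᵥ Q *ᵥ x + y ⬝ᵥ Q *ᵥ y ↔
      (x - x ⊓ y) ⬝ᵥ Q *ᵥ (y - x ⊓ y) ≤ 0 := by
  rw [hQ.dotProduct_mulVec_inf_add_sup]
  constructor <;> intro h <;> linarith

lemma posPart_dotProduct_mulVec_negPart_nonpos [IsOrderedRing R] (hQ : ∀ i j, i ≠ j → Q i j ≤ 0)
    (w : ι → R) :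
    w⁺ ⬝ᵥ Q *ᵥ w⁻ ≤ 0 := by
  simp only [dotProduct, mulVec, Finset.mul_sum]
  refine Finset.sum_nonpos fun i _ => Finset.sum_nonpos fun j _ => ?_
  obtain rfl | hij := eq_or_ne i j
  · rw [mul_left_comm, Pi.posPart_apply, Pi.negPart_apply, posPart_mul_negPart, mul_zero]
  · exact mul_nonpos_of_nonneg_of_nonpos (posPart_nonneg _)
      (mul_nonpos_of_nonpos_of_nonneg (hQ i j hij) (negPart_nonneg _))

end Matrix

/-- The quadratic function `x ↦ xᵀ Q x` (with `Q` symmetric) is submodular on `ℝⁿ`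
iff all off-diagonal entries of `Q` are nonpositive. -/
theorem quadratic_submodular_iff (n : ℕ) (Q : Matrix (Fin n) (Fin n) ℝ)
    (hQ : Q.IsSymm) :
    (∀ x y : Fin n → ℝ,
      (x ⊓ y) ⬝ᵥ Q.mulVec (x ⊓ y) + (x ⊔ y) ⬝ᵥ Q.mulVec (x ⊔ y) ≤
        x ⬝ᵥ Q.mulVec x + y ⬝ᵥ Q.mulVec y)
    ↔ (∀ i j : Fin n, i ≠ j → Q i j ≤ 0) := by
  simp only [hQ.dotProduct_mulVec_inf_add_sup_le_iff]
  constructor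
  · intro h i j hij
    simpa [Pi.single_inf_single_of_ne hij zero_le_one zero_le_one] using
      h (Pi.single i 1) (Pi.single j 1)
  · intro h x y
    rw [sub_inf_eq_posPart_sub, sub_inf_eq_negPart_sub]
    exact posPart_dotProduct_mulVec_negPart_nonpos h (x - y)
end

section
/- If the n-dimensional extension h_cumulative of H, defined on products of probability measures via h(μ) = ∫₀¹ H(F_{μ₁}⁻¹(t),…,F_{μₙ}⁻¹(t)) dt, is convex, then H is submodular. Specifically: evaluating h_cumulative at the uniform mixture μᵢ = ½δ_{aᵢ} + ½δ_{bᵢ} of two Dirac measures gives h_cumulative(μ) = ½H(min(a,b)) + ½H(max(a,b)), so convexity of h_cumulative yields H(min(a,b)) + H(max(a,b)) ≤ H(a) + H(b) for all a, b ∈ X. -/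
/-! The quantile function `invRevCDF` of `½ δ_c + ½ δ_d` is `max c d` on `(0, ½]` and `min c d`
on `(½, 1)`, while that of `δ_c` is constantly `c`. Hence `h_cumulative` of the coordinatewise
mixture of `δ_a` and `δ_b` is the average of `H (a ⊔ b)` and `H (a ⊓ b)`, and convexity at
`θ = ½` between `δ_a` and `δ_b` is exactly submodularity at `a, b`. -/

open MeasureTheory

/-- The reversed cumulative distribution function `F_μ(x) = μ {y | y ≥ x}`. -/
noncomputable def revCDF (μ : Measure ℝ) (x : ℝ) : ℝ := (μ {y | x ≤ y}).toReal

/-- Its "inverse" `F_μ⁻¹(t) = sup {x ∈ Xi | F_μ(x) ≥ t}`. -/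
noncomputable def invRevCDF (Xi : Set ℝ) (μ : Measure ℝ) (t : ℝ) : ℝ :=
  sSup {x | x ∈ Xi ∧ t ≤ revCDF μ x}

/-- The extension `h_cumulative(μ) = ∫₀¹ H(F_{μ₁}⁻¹(t),…,F_{μₙ}⁻¹(t)) dt`. -/
noncomputable def hcum (n : ℕ) (X : Fin n → Set ℝ) (H : (Fin n → ℝ) → ℝ)
    (μ : Fin n → Measure ℝ) : ℝ :=
  ∫ t in Set.Ioo (0 : ℝ) 1, H (fun i => invRevCDF (X i) (μ i) t)

open Set

section Quantile

variable {Xi : Set ℝ} {μ ν : Measure ℝ} {c d t : ℝ}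

lemma revCDF_dirac (c x : ℝ) : revCDF (Measure.dirac c) x = if x ≤ c then 1 else 0 := by
  by_cases h : x ≤ c <;> simp [revCDF, Measure.dirac_apply, h]

lemma revCDF_convexCombination [IsFiniteMeasure μ] [IsFiniteMeasure ν] {θ : ℝ}
    (hθ₀ : 0 ≤ θ) (hθ₁ : θ ≤ 1) (x : ℝ) :
    revCDF (ENNReal.ofReal θ • μ + ENNReal.ofReal (1 - θ) • ν) x =
      θ * revCDF μ x + (1 - θ) * revCDF ν x := by
  simp [revCDF, ENNReal.toReal_add, ENNReal.mul_ne_top, hθ₀, hθ₁]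

/-- `½ δ_c + ½ δ_d`, spelled as the convex combination at `θ = ½` so that convexity applies to it
without rewriting. -/
noncomputable def diracMidpoint (c d : ℝ) : Measure ℝ :=
  ENNReal.ofReal (1 / 2) • Measure.dirac c + ENNReal.ofReal (1 - 1 / 2) • Measure.dirac d

lemma revCDF_diracMidpoint (c d x : ℝ) :
    revCDF (diracMidpoint c d) x =
      (if x ≤ c then 1 else 0) / 2 + (if x ≤ d then 1 else 0) / 2 := by
  rw [diracMidpoint, revCDF_convexCombination (by norm_num) (by norm_num), revCDF_dirac,
    revCDF_dirac]
  ring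

lemma invRevCDF_dirac (hc : c ∈ Xi) (ht₀ : 0 < t) (ht₁ : t ≤ 1) :
    invRevCDF Xi (Measure.dirac c) t = c := by
  refine IsGreatest.csSup_eq ⟨⟨hc, by simpa [revCDF_dirac] using ht₁⟩, ?_⟩
  rintro x ⟨-, hx⟩
  by_contra! hcx
  simp [revCDF_dirac, hcx.not_ge] at hx
  linarith

lemma invRevCDF_diracMidpoint_of_le_half (hc : c ∈ Xi) (hd : d ∈ Xi) (ht₀ : 0 < t)
    (ht : t ≤ 1 / 2) : invRevCDF Xi (diracMidpoint c d) t = max c d := by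
  refine IsGreatest.csSup_eq ⟨⟨max_rec' (· ∈ Xi) hc hd, ?_⟩, ?_⟩
  · rcases le_total c d with h | h <;> simp [revCDF_diracMidpoint, h] <;> split_ifs <;> linarith
  · rintro x ⟨-, hx⟩
    by_contra! hcx
    simp [revCDF_diracMidpoint, (le_max_left c d).trans_lt hcx |>.not_ge,
      (le_max_right c d).trans_lt hcx |>.not_ge] at hx
    linarith

lemma invRevCDF_diracMidpoint_of_half_lt (hc : c ∈ Xi) (hd : d ∈ Xi) (ht : 1 / 2 < t)
    (ht₁ : t ≤ 1) : invRevCDF Xi (diracMidpoint c d) t = min c d := by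
  refine IsGreatest.csSup_eq ⟨⟨min_rec' (· ∈ Xi) hc hd, ?_⟩, ?_⟩
  · simp [revCDF_diracMidpoint]
    linarith
  · rintro x ⟨-, hx⟩
    by_contra! hcx
    rcases min_lt_iff.mp hcx with h | h <;>
      simp [revCDF_diracMidpoint, h.not_ge] at hx <;> split_ifs at hx <;> linarith

end Quantile

lemma setIntegral_Ioo_of_eqOn_Ioc_Ioo {f : ℝ → ℝ} {a s b p q : ℝ} (has : a ≤ s) (hsb : s < b)
    (hp : EqOn f (fun _ => p) (Ioc a s)) (hq : EqOn f (fun _ => q) (Ioo s b)) :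
    ∫ t in Ioo a b, f t = (s - a) * p + (b - s) * q := by
  rw [← Ioc_union_Ioo_eq_Ioo has hsb,
    setIntegral_union (Ioc_disjoint_Ioi_same.mono_right Ioo_subset_Ioi_self) measurableSet_Ioo
      ((integrableOn_const (by simp)).congr_fun hp.symm measurableSet_Ioc)
      ((integrableOn_const (by simp)).congr_fun hq.symm measurableSet_Ioo),
    setIntegral_congr_fun measurableSet_Ioc hp, setIntegral_congr_fun measurableSet_Ioo hq]
  simp [has, hsb.le]

section Extension

variable {n : ℕ} {X : Fin n → Set ℝ} (H : (Fin n → ℝ) → ℝ) {a b : Fin n → ℝ}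

lemma hcum_dirac (ha : ∀ i, a i ∈ X i) : hcum n X H (fun i => Measure.dirac (a i)) = H a := by
  rw [hcum, setIntegral_congr_fun measurableSet_Ioo (g := fun _ => H a)
    fun t ht => congrArg H (funext fun i => invRevCDF_dirac (ha i) ht.1 ht.2.le)]
  simp

lemma hcum_diracMidpoint (ha : ∀ i, a i ∈ X i) (hb : ∀ i, b i ∈ X i) :
    hcum n X H (fun i => diracMidpoint (a i) (b i)) = (H (a ⊔ b) + H (a ⊓ b)) / 2 := by
  rw [hcum, setIntegral_Ioo_of_eqOn_Ioc_Ioo (s := 1 / 2) (p := H (a ⊔ b)) (q := H (a ⊓ b))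
    (by norm_num) (by norm_num)
    (fun t ht => congrArg H (funext fun i =>
      invRevCDF_diracMidpoint_of_le_half (ha i) (hb i) ht.1 ht.2))
    (fun t ht => congrArg H (funext fun i =>
      invRevCDF_diracMidpoint_of_half_lt (ha i) (hb i) ht.1 ht.2.le))]
  ring

end Extension

theorem convex_hcum_implies_submodular_general (n : ℕ) (X : Fin n → Set ℝ)
    (H : (Fin n → ℝ) → ℝ)
    (hconv : ∀ μ ν : Fin n → Measure ℝ,
      (∀ i, IsProbabilityMeasure (μ i)) → (∀ i, μ i (X i)ᶜ = 0) →
      (∀ i, IsProbabilityMeasure (ν i)) → (∀ i, ν i (X i)ᶜ = 0) →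
      ∀ θ : ℝ, 0 ≤ θ → θ ≤ 1 →
        hcum n X H (fun i => ENNReal.ofReal θ • μ i + ENNReal.ofReal (1 - θ) • ν i) ≤
          θ * hcum n X H μ + (1 - θ) * hcum n X H ν) :
    ∀ a b : Fin n → ℝ, (∀ i, a i ∈ X i) → (∀ i, b i ∈ X i) →
      H (a ⊓ b) + H (a ⊔ b) ≤ H a + H b := by
  intro a b ha hb
  have hdirac_null {c : Fin n → ℝ} (hc : ∀ i, c i ∈ X i) (i : Fin n) :
      Measure.dirac (c i) (X i)ᶜ = 0 := by
    simp [Measure.dirac_apply, hc i]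
  have hmid : hcum n X H (fun i => diracMidpoint (a i) (b i)) ≤
      1 / 2 * hcum n X H (fun i => Measure.dirac (a i)) +
        (1 - 1 / 2) * hcum n X H (fun i => Measure.dirac (b i)) :=
    hconv _ _ (fun _ => inferInstance) (hdirac_null ha) (fun _ => inferInstance)
      (hdirac_null hb) (1 / 2) (by norm_num) (by norm_num)
  rw [hcum_diracMidpoint H ha hb, hcum_dirac H ha, hcum_dirac H hb] at hmid
  linarith

/-- If the extension `h_cumulative` is convex on products of probability measures
supported in the compact sets `X i`, then `H` is submodular: evaluating at the
midpoint mixtures of Dirac measures yields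
`H (a ⊓ b) + H (a ⊔ b) ≤ H a + H b` for all `a, b` in the product domain. -/
theorem convex_hcum_implies_submodular (n : ℕ) (X : Fin n → Set ℝ)
    (hX : ∀ i, IsCompact (X i)) (hXne : ∀ i, (X i).Nonempty)
    (H : (Fin n → ℝ) → ℝ) (hHc : ContinuousOn H (Set.pi Set.univ X))
    (hconv : ∀ μ ν : Fin n → Measure ℝ,
      (∀ i, IsProbabilityMeasure (μ i)) → (∀ i, μ i (X i)ᶜ = 0) →
      (∀ i, IsProbabilityMeasure (ν i)) → (∀ i, ν i (X i)ᶜ = 0) →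
      ∀ θ : ℝ, 0 ≤ θ → θ ≤ 1 →
        hcum n X H (fun i => ENNReal.ofReal θ • μ i + ENNReal.ofReal (1 - θ) • ν i) ≤
          θ * hcum n X H μ + (1 - θ) * hcum n X H ν) :
    ∀ a b : Fin n → ℝ, (∀ i, a i ∈ X i) → (∀ i, b i ∈ X i) →
      H (a ⊓ b) + H (a ⊔ b) ≤ H a + H b :=
  convex_hcum_implies_submodular_general n X H hconv
end

section
/- Let H be a continuous submodular function on a compact product X = ∏ᵢ Xᵢ ⊆ ℝⁿ, let γ ∈ P(X), and suppose there exist continuous potentials vᵢ : Xᵢ → ℝ with ∑ᵢ vᵢ(yᵢ) ≤ H(y) for all y ∈ X and equality ∑ᵢ vᵢ(xᵢ) = H(x) at every x ∈ supp(γ). If H is strictly submodular, then any two elements of supp(γ) are comparable in the componentwise order. -/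
open MeasureTheory

/-- The (topological) support of a measure on `Fin n → ℝ`. -/
def msupport {n : ℕ} (γ : Measure (Fin n → ℝ)) : Set (Fin n → ℝ) :=
  {p | ∀ U : Set (Fin n → ℝ), IsOpen U → p ∈ U → 0 < γ U}

/-!
A separable function `V x = ∑ i, v i (x i)` is modular: at every coordinate, `x i ⊓ y i` and
`x i ⊔ y i` are `x i` and `y i` in some order. If `V ≤ H` on the product with equality at
two incomparable points `x`, `y` of the support, then
`H x + H y = V (x ⊓ y) + V (x ⊔ y) ≤ H (x ⊓ y) + H (x ⊔ y)`, against strict submodularity.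
-/

theorem apply_min_add_apply_max {α M : Type*} [LinearOrder α] [AddCommMagma M]
    (f : α → M) (a b : α) : f (min a b) + f (max a b) = f a + f b := by
  rcases le_total a b with hab | hba
  · rw [min_eq_left hab, max_eq_right hab]
  · rw [min_eq_right hba, max_eq_left hba, add_comm]

theorem sum_apply_inf_add_sum_apply_sup {ι α M : Type*} [Fintype ι] [LinearOrder α]
    [AddCommMonoid M] (f : ι → α → M) (x y : ι → α) :
    ∑ i, f i ((x ⊓ y) i) + ∑ i, f i ((x ⊔ y) i) = ∑ i, f i (x i) + ∑ i, f i (y i) := by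
  simp only [← Finset.sum_add_distrib, Pi.inf_apply, Pi.sup_apply]
  exact Finset.sum_congr rfl fun i _ ↦ apply_min_add_apply_max (f i) (x i) (y i)

theorem add_le_inf_add_sup_of_modular_le {α : Type*} [Lattice α] {V H : α → ℝ}
    (hV : ∀ x y, V (x ⊓ y) + V (x ⊔ y) = V x + V y) {x y : α}
    (hinf : V (x ⊓ y) ≤ H (x ⊓ y)) (hsup : V (x ⊔ y) ≤ H (x ⊔ y))
    (hx : V x = H x) (hy : V y = H y) : H x + H y ≤ H (x ⊓ y) + H (x ⊔ y) := by
  linarith [hV x y]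

theorem strict_submodular_support_chain_general (n : ℕ) (X : Fin n → Set ℝ)
    (H : (Fin n → ℝ) → ℝ)
    (hstrict : ∀ x y : Fin n → ℝ, (∀ i, x i ∈ X i) → (∀ i, y i ∈ X i) →
      ¬ x ≤ y → ¬ y ≤ x → H (x ⊓ y) + H (x ⊔ y) < H x + H y)
    (γ : Measure (Fin n → ℝ)) (v : Fin n → ℝ → ℝ)
    (hineq : ∀ y : Fin n → ℝ, (∀ i, y i ∈ X i) → ∑ i, v i (y i) ≤ H y)
    (hsuppX : ∀ x ∈ msupport γ, ∀ i, x i ∈ X i)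
    (heq : ∀ x ∈ msupport γ, ∑ i, v i (x i) = H x) :
    ∀ x ∈ msupport γ, ∀ y ∈ msupport γ, x ≤ y ∨ y ≤ x := by
  intro x hx y hy
  by_contra! hxy
  have hxX := hsuppX x hx
  have hyX := hsuppX y hy
  have hinfX : ∀ i, (x ⊓ y) i ∈ X i := fun i ↦ min_rec' (X i) (hxX i) (hyX i)
  have hsupX : ∀ i, (x ⊔ y) i ∈ X i := fun i ↦ max_rec' (X i) (hxX i) (hyX i)
  have hle : H x + H y ≤ H (x ⊓ y) + H (x ⊔ y) :=
    add_le_inf_add_sup_of_modular_le (V := fun z ↦ ∑ i, v i (z i))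
      (sum_apply_inf_add_sum_apply_sup v) (hineq _ hinfX) (hineq _ hsupX) (heq x hx) (heq y hy)
  exact (hstrict x y hxX hyX hxy.1 hxy.2).not_ge hle

/-- For a continuous strictly submodular `H` on a compact product, if continuous
potentials `v i` satisfy `∑ i, v i (y i) ≤ H y` on the product with equality on the
support of `γ`, then any two elements of the support of `γ` are comparable. -/
theorem strict_submodular_support_chain (n : ℕ) (X : Fin n → Set ℝ)
    (hX : ∀ i, IsCompact (X i)) (H : (Fin n → ℝ) → ℝ)
    (hHc : ContinuousOn H (Set.pi Set.univ X))
    (hstrict : ∀ x y : Fin n → ℝ, (∀ i, x i ∈ X i) → (∀ i, y i ∈ X i) →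
      ¬ x ≤ y → ¬ y ≤ x → H (x ⊓ y) + H (x ⊔ y) < H x + H y)
    (γ : Measure (Fin n → ℝ)) (v : Fin n → ℝ → ℝ)
    (hv : ∀ i, ContinuousOn (v i) (X i))
    (hineq : ∀ y : Fin n → ℝ, (∀ i, y i ∈ X i) → ∑ i, v i (y i) ≤ H y)
    (hsuppX : ∀ x ∈ msupport γ, ∀ i, x i ∈ X i)
    (heq : ∀ x ∈ msupport γ, ∑ i, v i (x i) = H x) :
    ∀ x ∈ msupport γ, ∀ y ∈ msupport γ, x ≤ y ∨ y ≤ x :=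
  strict_submodular_support_chain_general n X H hstrict γ v hineq hsuppX heq
end

section
/- Let H be submodular on X = ∏ᵢ {0,…,kᵢ-1}, and let w be the output of the greedy algorithm for some ordering compatible with a nonincreasing ρ. Then w ∈ W(H): for every x ∈ X, ∑ᵢ₌₁ⁿ ∑_{zᵢ=1}^{xᵢ} wᵢ(zᵢ) ≤ H(x) - H(0), with equality when x = (k₁-1,…,kₙ-1). In particular, W(H) is nonempty. -/
/-!
Write `D c = ∑ᵢ ∑_{z ≤ cᵢ} wᵢ(z) - H c`. Along the greedy chain `D` is constant, since each step
adds exactly the increment of `H`. For a fixed `x` in the grid, `D (x ⊓ y s)` is nonincreasing in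
`s`: if the step raises coordinate `i` while `y s i < x i`, then `y s` and `x ⊓ y (s + 1)` have meet
`x ⊓ y s` and join `y (s + 1)`, and submodularity bounds the gain of `∑ w` by that of `H`;
otherwise `x ⊓ y s` does not move. Comparing `s = 0` with `s = r`, where `x ⊓ y r = x`, gives the
inequality, and constancy of `D` gives the equality at the top.
-/

open Function Finset

theorem Nat.rel_of_forall_lt_rel_succ {β : Type*} (R : β → β → Prop) [Std.Refl R]
    [IsTrans β R] {f : ℕ → β} {r : ℕ} (h : ∀ n < r, R (f n) (f (n + 1))) ⦃a b : ℕ⦄ (hab : a ≤ b)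
    (hb : b ≤ r) : R (f a) (f b) := by
  induction hab with
  | refl => exact refl _
  | step hle ih => exact _root_.trans (ih (by omega)) (h _ (by omega))

section Lattice

variable {ι α : Type*} [DecidableEq ι] [Lattice α] {a x : ι → α} {i : ι} {b : α}

theorem inf_update_of_le (hb : b ≤ x i) : x ⊓ update a i b = update (x ⊓ a) i b := by
  ext j; rcases eq_or_ne j i with rfl | hj <;> simp [*]

theorem inf_update_of_ge (ha : x i ≤ a i) (hb : x i ≤ b) : x ⊓ update a i b = x ⊓ a := by
  ext j; rcases eq_or_ne j i with rfl | hj <;> simp [*]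

theorem sup_inf_update (ha : a i ≤ b) (hb : b ≤ x i) : a ⊔ (x ⊓ update a i b) = update a i b := by
  ext j; rcases eq_or_ne j i with rfl | hj <;> simp [*]

end Lattice

variable {ι : Type*} [Fintype ι] [DecidableEq ι]

def cumulativeWeight (w : ι → ℕ → ℝ) (a : ι → ℕ) : ℝ :=
  ∑ i, ∑ z ∈ Icc 1 (a i), w i z

omit [DecidableEq ι] in
@[simp]
theorem cumulativeWeight_zero (w : ι → ℕ → ℝ) : cumulativeWeight w 0 = 0 := by
  simp [cumulativeWeight]

theorem cumulativeWeight_update_succ (w : ι → ℕ → ℝ) (a : ι → ℕ) (i : ι) :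
    cumulativeWeight w (update a i (a i + 1)) = cumulativeWeight w a + w i (a i + 1) := by
  have hcoord : ∀ j, ∑ z ∈ Icc 1 (update a i (a i + 1) j), w j z =
      ∑ z ∈ Icc 1 (a j), w j z + (Pi.single i (w i (a i + 1)) : ι → ℝ) j := by
    intro j
    rcases eq_or_ne j i with rfl | hj
    · simp [Finset.sum_Icc_succ_top]
    · simp [hj]
  simp only [cumulativeWeight, hcoord, sum_add_distrib, sum_pi_single', mem_univ, if_true]

def IsGreedyStep (H : (ι → ℕ) → ℝ) (w : ι → ℕ → ℝ) (a b : ι → ℕ) : Prop :=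
  ∃ i, b = update a i (a i + 1) ∧ w i (a i + 1) = H b - H a

namespace IsGreedyStep

variable {H : (ι → ℕ) → ℝ} {w : ι → ℕ → ℝ} {a b : ι → ℕ}

omit [Fintype ι] in
theorem le (h : IsGreedyStep H w a b) : a ≤ b := by
  obtain ⟨i, rfl, -⟩ := h
  exact le_update_self_iff.2 (Nat.le_succ _)

theorem cumulativeWeight_sub_eq (h : IsGreedyStep H w a b) :
    cumulativeWeight w b - H b = cumulativeWeight w a - H a := by
  obtain ⟨i, rfl, hw⟩ := h
  rw [cumulativeWeight_update_succ, hw]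
  ring

theorem cumulativeWeight_inf_sub_le {top x : ι → ℕ}
    (hsub : ∀ c d, c ≤ top → d ≤ top → H (c ⊓ d) + H (c ⊔ d) ≤ H c + H d)
    (h : IsGreedyStep H w a b) (ha : a ≤ top) (hx : x ≤ top) :
    cumulativeWeight w (x ⊓ b) - H (x ⊓ b) ≤ cumulativeWeight w (x ⊓ a) - H (x ⊓ a) := by
  have hab := h.le
  obtain ⟨i, rfl, hw⟩ := h
  rcases lt_or_ge (a i) (x i) with hlt | hge
  · have hsm := hsub a (x ⊓ update a i (a i + 1)) ha (inf_le_left.trans hx)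
    rw [sup_inf_update (Nat.le_add_right _ 1) hlt, inf_left_comm, inf_eq_left.2 hab] at hsm
    have hx_inf_a : (x ⊓ a) i = a i := min_eq_right hlt.le
    have hcw : cumulativeWeight w (x ⊓ update a i (a i + 1)) =
        cumulativeWeight w (x ⊓ a) + w i (a i + 1) := by
      rw [inf_update_of_le hlt, ← hx_inf_a, cumulativeWeight_update_succ, hx_inf_a]
    rw [hcw, hw]
    linarith
  · rw [inf_update_of_ge hge (hge.trans (Nat.le_succ _))]

end IsGreedyStep

section Chain

variable {H : (ι → ℕ) → ℝ} {w : ι → ℕ → ℝ} {y : ℕ → ι → ℕ} {r : ℕ}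

theorem cumulativeWeight_chain_end (hy : ∀ s < r, IsGreedyStep H w (y s) (y (s + 1)))
    (hy0 : y 0 = 0) : cumulativeWeight w (y r) = H (y r) - H 0 := by
  have := Nat.rel_of_forall_lt_rel_succ
    (f := fun s => cumulativeWeight w (y s) - H (y s)) Eq
    (fun s hs => (hy s hs).cumulativeWeight_sub_eq.symm) (Nat.zero_le r) le_rfl
  simp only [hy0, cumulativeWeight_zero] at this
  linarith

theorem cumulativeWeight_le_of_chain
    (hsub : ∀ c d, c ≤ y r → d ≤ y r → H (c ⊓ d) + H (c ⊔ d) ≤ H c + H d)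
    (hy : ∀ s < r, IsGreedyStep H w (y s) (y (s + 1))) (hy0 : y 0 = 0) {x : ι → ℕ}
    (hx : x ≤ y r) : cumulativeWeight w x ≤ H x - H 0 := by
  have hle_end : ∀ s ≤ r, y s ≤ y r := fun s hs =>
    Nat.rel_of_forall_lt_rel_succ (· ≤ ·) (fun s hs => (hy s hs).le) hs le_rfl
  have := Nat.rel_of_forall_lt_rel_succ
    (f := fun s => cumulativeWeight w (x ⊓ y s) - H (x ⊓ y s)) (· ≥ ·)
    (fun s hs => (hy s hs).cumulativeWeight_inf_sub_le hsub (hle_end s hs.le) hx)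
    (Nat.zero_le r) le_rfl
  rw [hy0, inf_eq_right.2 (fun _ => Nat.zero_le _), inf_eq_left.2 hx,
    cumulativeWeight_zero] at this
  linarith

end Chain

theorem greedy_in_WH_general (n : ℕ) (k : Fin n → ℕ) (H : (Fin n → ℕ) → ℝ)
    (hsub : ∀ x y : Fin n → ℕ, (∀ i, x i ≤ k i - 1) → (∀ i, y i ≤ k i - 1) →
      H (x ⊓ y) + H (x ⊔ y) ≤ H x + H y)
    (r : ℕ)
    (y : ℕ → Fin n → ℕ) (hy0 : y 0 = fun _ => 0) (hyr : y r = fun i => k i - 1)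
    (hstep : ∀ s, 1 ≤ s → s ≤ r →
      ∃ i, y s = Function.update (y (s - 1)) i (y (s - 1) i + 1))
    (w : Fin n → ℕ → ℝ)
    (hw : ∀ s, 1 ≤ s → s ≤ r → ∀ i, y s i = y (s - 1) i + 1 →
      w i (y s i) = H (y s) - H (y (s - 1))) :
    (∀ x : Fin n → ℕ, (∀ i, x i ≤ k i - 1) →
      ∑ i, ∑ z ∈ Finset.Icc 1 (x i), w i z ≤ H x - H (fun _ => 0)) ∧
    ∑ i, ∑ z ∈ Finset.Icc 1 (k i - 1), w i z =
      H (fun i => k i - 1) - H (fun _ => 0) := by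
  have hchain : ∀ s < r, IsGreedyStep H w (y s) (y (s + 1)) := by
    intro s hs
    obtain ⟨i, hi⟩ := hstep (s + 1) (by omega) hs
    rw [Nat.add_sub_cancel] at hi
    have hi_succ : y (s + 1) i = y s i + 1 := by simp [hi]
    refine ⟨i, hi, ?_⟩
    simpa [hi_succ] using hw (s + 1) (by omega) hs i hi_succ
  have hsub' : ∀ c d, c ≤ y r → d ≤ y r → H (c ⊓ d) + H (c ⊔ d) ≤ H c + H d := by
    rw [hyr]
    exact hsub
  refine ⟨fun x hx => cumulativeWeight_le_of_chain hsub' hchain hy0 (hyr ▸ hx), ?_⟩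
  have hend := cumulativeWeight_chain_end hchain hy0
  rw [hyr] at hend
  exact hend

/-- The output `w` of the greedy algorithm (along any increasing chain `y` from `0` to
`(k₁-1,…,kₙ-1)` compatible with a nonincreasing `ρ`) belongs to `W(H)`: for all `x`
in the grid, `∑ i, ∑_{z=1}^{x i} w i z ≤ H x - H 0`, with equality at the top
element. In particular `W(H)` is nonempty. -/
theorem greedy_in_WH (n : ℕ) (k : Fin n → ℕ) (H : (Fin n → ℕ) → ℝ)
    (hsub : ∀ x y : Fin n → ℕ, (∀ i, x i ≤ k i - 1) → (∀ i, y i ≤ k i - 1) →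
      H (x ⊓ y) + H (x ⊔ y) ≤ H x + H y)
    (r : ℕ) (hr : r = ∑ i, (k i - 1))
    (y : ℕ → Fin n → ℕ) (hy0 : y 0 = fun _ => 0) (hyr : y r = fun i => k i - 1)
    (hstep : ∀ s, 1 ≤ s → s ≤ r →
      ∃ i, y s = Function.update (y (s - 1)) i (y (s - 1) i + 1))
    (w : Fin n → ℕ → ℝ)
    (hw : ∀ s, 1 ≤ s → s ≤ r → ∀ i, y s i = y (s - 1) i + 1 →
      w i (y s i) = H (y s) - H (y (s - 1))) :
    (∀ x : Fin n → ℕ, (∀ i, x i ≤ k i - 1) →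
      ∑ i, ∑ z ∈ Finset.Icc 1 (x i), w i z ≤ H x - H (fun _ => 0)) ∧
    ∑ i, ∑ z ∈ Finset.Icc 1 (k i - 1), w i z =
      H (fun i => k i - 1) - H (fun _ => 0) :=
  greedy_in_WH_general n k H hsub r y hy0 hyr hstep w hw
end

section
/- Let H be submodular on X = ∏ᵢ {0,…,kᵢ-1} and let y(0) ≤ y(1) ≤ … ≤ y(r) be any chain in X with y(0) = 0, y(r) = (k₁-1,…,kₙ-1), and y(s) = y(s-1) + e_{i(s)} for each s. Then for every x ∈ X, ∑_{s : y(s)_{i(s)} ≤ x_{i(s)}} (H(y(s)) - H(y(s-1))) ≤ H(x) - H(0). -/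
/-- Key greedy inequality: for a submodular `H` on the grid and any unit-increment
chain `y(0) = 0, …, y(r) = (k₁-1,…,kₙ-1)` with increments in coordinates `ι s`,
for every grid point `x`,
`∑_{s : y(s)_{ι(s)} ≤ x_{ι(s)}} (H (y s) - H (y (s-1))) ≤ H x - H 0`. -/
theorem greedy_chain_inequality (n : ℕ) (k : Fin n → ℕ) (H : (Fin n → ℕ) → ℝ)
    (hsub : ∀ x y : Fin n → ℕ, (∀ i, x i ≤ k i - 1) → (∀ i, y i ≤ k i - 1) →
      H (x ⊓ y) + H (x ⊔ y) ≤ H x + H y)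
    (r : ℕ) (y : ℕ → Fin n → ℕ) (ι : ℕ → Fin n)
    (hy0 : y 0 = fun _ => 0) (hyr : y r = fun i => k i - 1)
    (hstep : ∀ s, 1 ≤ s → s ≤ r →
      y s = Function.update (y (s - 1)) (ι s) (y (s - 1) (ι s) + 1))
    (x : Fin n → ℕ) (hx : ∀ i, x i ≤ k i - 1) :
    ∑ s ∈ (Finset.Icc 1 r).filter (fun s => y s (ι s) ≤ x (ι s)),
        (H (y s) - H (y (s - 1))) ≤ H x - H (fun _ => 0) := by
  -- the chain is pointwise monotone at each step
  have hstep' : ∀ s, 1 ≤ s → s ≤ r → ∀ i, y (s - 1) i ≤ y s i := by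
    intro s h1 h2 i
    rw [hstep s h1 h2]
    rcases eq_or_ne i (ι s) with h | h
    · subst h; simp
    · simp [Function.update_of_ne h]
  -- every y s (s ≤ r) is dominated by y r
  have haux : ∀ d i, y (r - d) i ≤ y r i := by
    intro d
    induction d with
    | zero => simp
    | succ d ih =>
      intro i
      rcases Nat.lt_or_ge d r with hd | hd
      · have h1 : 1 ≤ r - d := by omega
        have h2 : r - d ≤ r := Nat.sub_le _ _
        have he : r - (d + 1) = (r - d) - 1 := by omega
        rw [he]
        exact le_trans (hstep' (r - d) h1 h2 i) (ih i)
      · have he : r - (d + 1) = r - d := by omega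
        rw [he]; exact ih i
  have hbound : ∀ s, s ≤ r → ∀ i, y s i ≤ k i - 1 := by
    intro s hs i
    have h := haux (r - s) i
    rw [Nat.sub_sub_self hs] at h
    calc y s i ≤ y r i := h
      _ = k i - 1 := by rw [hyr]
  set g : ℕ → ℝ := fun s => H (y s ⊓ x) with hg
  have hkey : ∀ i ∈ Finset.range r,
      (if y (i + 1) (ι (i + 1)) ≤ x (ι (i + 1)) then H (y (i + 1)) - H (y i) else 0)
        ≤ g (i + 1) - g i := by
    intro i hi
    rw [Finset.mem_range] at hi
    have h1 : 1 ≤ i + 1 := Nat.le_add_left 1 i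
    have h2 : i + 1 ≤ r := hi
    have hys := hstep (i + 1) h1 h2
    simp only [Nat.add_sub_cancel] at hys
    by_cases hP : y (i + 1) (ι (i + 1)) ≤ x (ι (i + 1))
    · rw [if_pos hP]
      have hb1 : ∀ j, y i j ≤ k j - 1 := hbound i (le_of_lt hi)
      have hb2 : ∀ j, (y (i + 1) ⊓ x) j ≤ k j - 1 := fun j =>
        le_trans inf_le_right (hx j)
      have hs := hsub (y i) (y (i + 1) ⊓ x) hb1 hb2
      have e1 : y i ⊓ (y (i + 1) ⊓ x) = y i ⊓ x := by
        funext j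
        simp only [Pi.inf_apply]
        rw [hys]
        rcases eq_or_ne j (ι (i + 1)) with h | h
        · subst h; simp only [Function.update_self]; omega
        · simp only [Function.update_of_ne h]; omega
      have e2 : y i ⊔ (y (i + 1) ⊓ x) = y (i + 1) := by
        rw [hys] at hP
        simp only [Function.update_self] at hP
        funext j
        simp only [Pi.sup_apply, Pi.inf_apply]
        rw [hys]
        rcases eq_or_ne j (ι (i + 1)) with h | h
        · subst h; simp only [Function.update_self]; omega
        · simp only [Function.update_of_ne h]; omega
      rw [e1, e2] at hs
      simp only [hg]
      linarith
    · rw [if_neg hP]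
      rw [hys] at hP
      simp only [Function.update_self, not_le] at hP
      have e3 : y (i + 1) ⊓ x = y i ⊓ x := by
        funext j
        simp only [Pi.inf_apply]
        rw [hys]
        rcases eq_or_ne j (ι (i + 1)) with h | h
        · subst h; simp only [Function.update_self]; omega
        · simp only [Function.update_of_ne h]
      simp [hg, e3]
  have hsum : ∑ s ∈ (Finset.Icc 1 r).filter (fun s => y s (ι s) ≤ x (ι s)),
      (H (y s) - H (y (s - 1)))
      = ∑ i ∈ Finset.range r,
        (if y (i + 1) (ι (i + 1)) ≤ x (ι (i + 1)) then H (y (i + 1)) - H (y i) else 0) := by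
    rw [Finset.sum_filter]
    refine Finset.sum_bij' (fun s _ => s - 1) (fun i _ => i + 1) ?_ ?_ ?_ ?_ ?_ <;>
      intro a ha <;>
      simp only [Finset.mem_Icc, Finset.mem_range] at ha ⊢
    · omega
    · omega
    · omega
    · rfl
    · have : a - 1 + 1 = a := by omega
      rw [this]
  rw [hsum]
  calc ∑ i ∈ Finset.range r,
        (if y (i + 1) (ι (i + 1)) ≤ x (ι (i + 1)) then H (y (i + 1)) - H (y i) else 0)
      ≤ ∑ i ∈ Finset.range r, (g (i + 1) - g i) := Finset.sum_le_sum hkey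
    _ = g r - g 0 := Finset.sum_range_sub g r
    _ = H x - H (fun _ => 0) := by
        have e4 : y r ⊓ x = x := by
          funext j
          simp only [Pi.inf_apply]
          rw [hyr]
          exact min_eq_right (hx j)
        have e5 : y 0 ⊓ x = fun _ => 0 := by
          funext j
          simp only [Pi.inf_apply]
          rw [hy0]
          simp
        simp [hg, e4, e5]
end

section
/- Let H be submodular on X = ∏ᵢ {0,…,kᵢ-1} and suppose x, x' minimize respectively H(y) + ∑ᵢ cᵢ(yᵢ, 1-t) and H(y) + ∑ᵢ cᵢ(yᵢ, 1-t') over y ∈ X, where each cᵢ : Xᵢ × [0,1] → ℝ is strictly submodular in its two arguments and t > t'. Then x ≤ x' componentwise. -/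
/-- Monotone comparative statics: if `H` is submodular on the grid, each
`cᵢ : {0,…,kᵢ-1} × [0,1] → ℝ` is strictly submodular (the difference
`cᵢ(z',·) - cᵢ(z,·)` is strictly decreasing for `z < z'`), and `x`, `x'` minimize
`y ↦ H y + ∑ i, cᵢ(yᵢ, 1-t)` and `y ↦ H y + ∑ i, cᵢ(yᵢ, 1-t')` respectively with
`t > t'`, then `x ≤ x'` componentwise. -/
theorem parametric_minimizers_monotone (n : ℕ) (k : Fin n → ℕ)
    (H : (Fin n → ℕ) → ℝ)
    (hsub : ∀ x y : Fin n → ℕ, (∀ i, x i ≤ k i - 1) → (∀ i, y i ≤ k i - 1) →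
      H (x ⊓ y) + H (x ⊔ y) ≤ H x + H y)
    (c : Fin n → ℕ → ℝ → ℝ)
    (hc : ∀ i : Fin n, ∀ z z' : ℕ, z < z' → z' ≤ k i - 1 →
      ∀ s s' : ℝ, 0 ≤ s → s < s' → s' ≤ 1 →
        c i z' s' - c i z s' < c i z' s - c i z s)
    (t t' : ℝ) (ht'0 : 0 ≤ t') (htt' : t' < t) (ht1 : t ≤ 1)
    (x x' : Fin n → ℕ) (hx : ∀ i, x i ≤ k i - 1) (hx' : ∀ i, x' i ≤ k i - 1)
    (hxmin : ∀ z : Fin n → ℕ, (∀ i, z i ≤ k i - 1) →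
      H x + ∑ i, c i (x i) (1 - t) ≤ H z + ∑ i, c i (z i) (1 - t))
    (hx'min : ∀ z : Fin n → ℕ, (∀ i, z i ≤ k i - 1) →
      H x' + ∑ i, c i (x' i) (1 - t') ≤ H z + ∑ i, c i (z i) (1 - t')) :
    ∀ i, x i ≤ x' i := by
  by_contra hcon
  push_neg at hcon
  obtain ⟨j, hj⟩ := hcon
  set m : Fin n → ℕ := x ⊓ x' with hm
  set M : Fin n → ℕ := x ⊔ x' with hM
  have hmk : ∀ i, m i ≤ k i - 1 := fun i => le_trans (min_le_left _ _) (hx i)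
  have hMk : ∀ i, M i ≤ k i - 1 := fun i => max_le (hx i) (hx' i)
  have A := hxmin m hmk
  have B := hx'min M hMk
  have S := hsub x x' hx hx'
  have key : ∑ i, c i (x i) (1 - t) + ∑ i, c i (x' i) (1 - t')
      ≤ ∑ i, c i (m i) (1 - t) + ∑ i, c i (M i) (1 - t') := by linarith
  have strict : ∑ i, (c i (m i) (1 - t) + c i (M i) (1 - t'))
      < ∑ i, (c i (x i) (1 - t) + c i (x' i) (1 - t')) := by
    apply Finset.sum_lt_sum
    · intro i _
      rcases le_or_gt (x i) (x' i) with h | h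
      · have hmi : m i = x i := min_eq_left h
        have hMi : M i = x' i := max_eq_right h
        rw [hmi, hMi]
      · have hmi : m i = x' i := min_eq_right h.le
        have hMi : M i = x i := max_eq_left h.le
        have := hc i (x' i) (x i) h (hx i) (1 - t) (1 - t')
          (by linarith) (by linarith) (by linarith)
        rw [hmi, hMi]; linarith
    · refine ⟨j, Finset.mem_univ j, ?_⟩
      have hmi : m j = x' j := min_eq_right hj.le
      have hMi : M j = x j := max_eq_left hj.le
      have := hc j (x' j) (x j) hj (hx j) (1 - t) (1 - t')
        (by linarith) (by linarith) (by linarith)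
      rw [hmi, hMi]; linarith
  rw [Finset.sum_add_distrib, Finset.sum_add_distrib] at strict
  linarith
end

section
/- Let H_ring be a submodular function on the lattice of monotone Boolean vectors ∏ᵢ {0,1}^{kᵢ-1}_↓ (vectors with nonincreasing components in each block), and extend it to all z ∈ ∏ᵢ {0,1}^{kᵢ-1} by H_ext(z) = H_ring(z↓) + ∑ᵢ Bᵢ‖zᵢ↓ - zᵢ‖₁, where z↓ is the smallest monotone vector dominating z componentwise. If the constants Bᵢ > 0 satisfy |H_ring(y↓) - H_ring(x↓)| ≤ ∑ᵢ Bᵢ‖xᵢ - yᵢ‖₁ for all monotone x ≤ y, then H_ext is submodular on {0,1}^{∑ᵢ(kᵢ-1)}, and every minimizer of H_ext is a monotone vector (belongs to the ring family). -/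
/-- A Boolean block-vector with nonincreasing components (a member of the ring
family). -/
def MonoVec (m : ℕ) (f : ℕ → Bool) : Prop :=
  ∀ x y : ℕ, x ≤ y → y < m → f y ≤ f x

open scoped Classical in
/-- `z↓`: the smallest monotone (nonincreasing) vector dominating `z`. -/
noncomputable def zdn (m : ℕ) (f : ℕ → Bool) (x : ℕ) : Bool :=
  if ∃ y : ℕ, x ≤ y ∧ y < m ∧ f y = true then true else false

/-- The Hamming distance `‖f - g‖₁` restricted to the first `m` coordinates. -/
def diffCount (m : ℕ) (f g : ℕ → Bool) : ℕ :=
  ((Finset.range m).filter fun x => f x ≠ g x).card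

lemma zdn_true_iff (m : ℕ) (f : ℕ → Bool) (x : ℕ) :
    zdn m f x = true ↔ ∃ y, x ≤ y ∧ y < m ∧ f y = true := by
  unfold zdn; split <;> simp_all

lemma monovec_zdn (m : ℕ) (f : ℕ → Bool) : MonoVec m (zdn m f) := by
  intro x y hxy _
  cases hz : zdn m f y
  · simp
  · rw [zdn_true_iff] at hz
    obtain ⟨w, hw1, hw2, hw3⟩ := hz
    have : zdn m f x = true := (zdn_true_iff m f x).2 ⟨w, hxy.trans hw1, hw2, hw3⟩
    simp [this]

lemma le_zdn (m : ℕ) (f : ℕ → Bool) (x : ℕ) (hx : x < m) : f x ≤ zdn m f x := by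
  cases hf : f x
  · simp
  · have : zdn m f x = true := (zdn_true_iff m f x).2 ⟨x, le_refl x, hx, hf⟩
    simp [this]

lemma zdn_eq_of_mono (m : ℕ) (f : ℕ → Bool) (hf : MonoVec m f) (x : ℕ) (hx : x < m) :
    zdn m f x = f x := by
  cases hfx : f x
  · cases hz : zdn m f x
    · rfl
    · rw [zdn_true_iff] at hz
      obtain ⟨y, hy1, hy2, hy3⟩ := hz
      have := hf x y hy1 hy2
      rw [hy3, hfx] at this
      exact absurd this (by simp)
  · exact le_antisymm (by simp) (by rw [← hfx]; exact le_zdn m f x hx)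

lemma zdn_idem (m : ℕ) (f : ℕ → Bool) : zdn m (zdn m f) = zdn m f := by
  funext x
  cases hz : zdn m f x
  · cases hz2 : zdn m (zdn m f) x
    · rfl
    · rw [zdn_true_iff] at hz2
      obtain ⟨y, hy1, hy2, hy3⟩ := hz2
      have := monovec_zdn m f x y hy1 hy2
      rw [hy3, hz] at this
      exact absurd this (by simp)
  · cases hz2 : zdn m (zdn m f) x
    · obtain ⟨y, hy1, hy2, _⟩ := (zdn_true_iff m f x).1 hz
      have hlt : x < m := lt_of_le_of_lt hy1 hy2
      have : zdn m (zdn m f) x = true :=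
        (zdn_true_iff m (zdn m f) x).2 ⟨x, le_refl x, hlt, hz⟩
      rw [hz2] at this; exact absurd this (by simp)
    · rfl

lemma zdn_or (m : ℕ) (f g : ℕ → Bool) (x : ℕ) :
    zdn m (fun y => f y || g y) x = (zdn m f x || zdn m g x) := by
  have h : zdn m (fun y => f y || g y) x = true ↔ (zdn m f x || zdn m g x) = true := by
    rw [Bool.or_eq_true_iff, zdn_true_iff, zdn_true_iff, zdn_true_iff]
    constructor
    · rintro ⟨y, h1, h2, h3⟩
      rcases Bool.or_eq_true_iff.1 h3 with h | h
      · exact Or.inl ⟨y, h1, h2, h⟩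
      · exact Or.inr ⟨y, h1, h2, h⟩
    · rintro (⟨y, h1, h2, h3⟩ | ⟨y, h1, h2, h3⟩)
      · exact ⟨y, h1, h2, by simp [h3]⟩
      · exact ⟨y, h1, h2, by simp [h3]⟩
  cases hb : zdn m (fun y => f y || g y) x <;>
    cases hc : (zdn m f x || zdn m g x) <;> simp_all

lemma zdn_and_le (m : ℕ) (f g : ℕ → Bool) (x : ℕ) :
    zdn m (fun y => f y && g y) x ≤ (zdn m f x && zdn m g x) := by
  cases hz : zdn m (fun y => f y && g y) x
  · simp
  · rw [zdn_true_iff] at hz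
    obtain ⟨y, h1, h2, h3⟩ := hz
    rw [Bool.and_eq_true_iff] at h3
    rw [(zdn_true_iff m f x).2 ⟨y, h1, h2, h3.1⟩, (zdn_true_iff m g x).2 ⟨y, h1, h2, h3.2⟩]
    simp

lemma monovec_and (m : ℕ) (f g : ℕ → Bool) (hf : MonoVec m f) (hg : MonoVec m g) :
    MonoVec m (fun x => f x && g x) := by
  intro x y hxy hy
  have h1 := hf x y hxy hy
  have h2 := hg x y hxy hy
  show (f y && g y) ≤ (f x && g x)
  revert h1 h2
  cases f x <;> cases f y <;> cases g x <;> cases g y <;> decide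

lemma diffCount_eq_sum (m : ℕ) (f g : ℕ → Bool) :
    diffCount m f g = ∑ x ∈ Finset.range m, if f x = g x then 0 else 1 := by
  unfold diffCount
  rw [Finset.card_filter]
  apply Finset.sum_congr rfl
  intro x _
  by_cases h : f x = g x <;> simp [h]

lemma boolkey : ∀ p q A A' U : Bool, p ≤ A → q ≤ A' → (p && q) ≤ U → U ≤ (A && A') →
    ((if U = (p && q) then 0 else 1) + (if U = (A && A') then 0 else 1)
     + (if (A || A') = (p || q) then 0 else 1) : ℕ)
    = (if A = p then 0 else 1) + (if A' = q then 0 else 1) := by decide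

lemma diffCount_self (m : ℕ) (f : ℕ → Bool) : diffCount m f f = 0 := by
  unfold diffCount
  simp

lemma zdn_or_fun (m : ℕ) (f g : ℕ → Bool) :
    zdn m (fun y => f y || g y) = fun x => zdn m f x || zdn m g x :=
  funext (zdn_or m f g)

lemma key_count (M : ℕ) (z z' : ℕ → Bool) :
    diffCount M (zdn M fun x => z x && z' x) (fun x => z x && z' x)
  + diffCount M (zdn M fun x => z x && z' x) (fun x => zdn M z x && zdn M z' x)
  + diffCount M (zdn M fun x => z x || z' x) (fun x => z x || z' x)
  = diffCount M (zdn M z) z + diffCount M (zdn M z') z' := by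
  simp only [diffCount_eq_sum, ← Finset.sum_add_distrib]
  apply Finset.sum_congr rfl
  intro x hx
  rw [Finset.mem_range] at hx
  rw [zdn_or]
  exact boolkey (z x) (z' x) (zdn M z x) (zdn M z' x) (zdn M (fun y => z y && z' y) x)
    (le_zdn M z x hx) (le_zdn M z' x hx) (le_zdn M (fun y => z y && z' y) x hx) (zdn_and_le M z z' x)

/-- The extension `H_ext(z) = H_ring(z↓) + ∑ i, B i * ‖z i ↓ - z i‖₁`. -/
noncomputable def Hext (n : ℕ) (m : Fin n → ℕ) (B : Fin n → ℝ)
    (Hring : (Fin n → ℕ → Bool) → ℝ) (z : Fin n → ℕ → Bool) : ℝ :=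
  Hring (fun i => zdn (m i) (z i)) +
    ∑ i, B i * (diffCount (m i) (zdn (m i) (z i)) (z i) : ℝ)

/-- If `Hring` is submodular on the ring family of monotone vectors and the constants
`B i > 0` dominate its variation, then `H_ext` is submodular on all Boolean vectors,
and every minimizer of `H_ext` is monotone (belongs to the ring family). -/
theorem Hext_submodular_and_minimizers_monotone (n : ℕ) (m : Fin n → ℕ)
    (B : Fin n → ℝ) (hB : ∀ i, 0 < B i)
    (Hring : (Fin n → ℕ → Bool) → ℝ)
    (hsub : ∀ z z' : Fin n → ℕ → Bool,
      (∀ i, MonoVec (m i) (z i)) → (∀ i, MonoVec (m i) (z' i)) →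
      Hring (fun i x => z i x && z' i x) + Hring (fun i x => z i x || z' i x) ≤
        Hring z + Hring z')
    (hlip : ∀ z z' : Fin n → ℕ → Bool,
      (∀ i, MonoVec (m i) (z i)) → (∀ i, MonoVec (m i) (z' i)) →
      (∀ i : Fin n, ∀ x < m i, z i x ≤ z' i x) →
      |Hring z' - Hring z| ≤ ∑ i, B i * (diffCount (m i) (z i) (z' i) : ℝ)) :
    (∀ z z' : Fin n → ℕ → Bool,
      Hext n m B Hring (fun i x => z i x && z' i x) +
        Hext n m B Hring (fun i x => z i x || z' i x) ≤
        Hext n m B Hring z + Hext n m B Hring z') ∧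
    (∀ z : Fin n → ℕ → Bool,
      (∀ z' : Fin n → ℕ → Bool, Hext n m B Hring z ≤ Hext n m B Hring z') →
      ∀ i, MonoVec (m i) (z i)) := by
  constructor
  · intro z z'
    simp only [Hext, zdn_or_fun]
    have lip : Hring (fun i => zdn (m i) fun x => z i x && z' i x) ≤
        Hring (fun i x => zdn (m i) (z i) x && zdn (m i) (z' i) x) +
        ∑ i, B i * (diffCount (m i) (zdn (m i) fun x => z i x && z' i x)
          (fun x => zdn (m i) (z i) x && zdn (m i) (z' i) x) : ℝ) := by
      have h := hlip (fun i => zdn (m i) fun x => z i x && z' i x)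
        (fun i x => zdn (m i) (z i) x && zdn (m i) (z' i) x)
        (fun i => monovec_zdn _ _)
        (fun i => monovec_and _ _ _ (monovec_zdn _ _) (monovec_zdn _ _))
        (fun i x _ => zdn_and_le (m i) (z i) (z' i) x)
      have h2 := (abs_le.mp h).1
      linarith
    have sub : Hring (fun i x => zdn (m i) (z i) x && zdn (m i) (z' i) x) +
        Hring (fun i x => zdn (m i) (z i) x || zdn (m i) (z' i) x) ≤
        Hring (fun i => zdn (m i) (z i)) + Hring (fun i => zdn (m i) (z' i)) :=
      hsub _ _ (fun i => monovec_zdn _ _) (fun i => monovec_zdn _ _)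
    have cnt : (∑ i, B i * (diffCount (m i) (zdn (m i) fun x => z i x && z' i x)
          (fun x => z i x && z' i x) : ℝ))
        + (∑ i, B i * (diffCount (m i) (zdn (m i) fun x => z i x && z' i x)
          (fun x => zdn (m i) (z i) x && zdn (m i) (z' i) x) : ℝ))
        + (∑ i, B i * (diffCount (m i) (fun x => zdn (m i) (z i) x || zdn (m i) (z' i) x)
          (fun x => z i x || z' i x) : ℝ))
        = (∑ i, B i * (diffCount (m i) (zdn (m i) (z i)) (z i) : ℝ))
        + (∑ i, B i * (diffCount (m i) (zdn (m i) (z' i)) (z' i) : ℝ)) := by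
      rw [← Finset.sum_add_distrib, ← Finset.sum_add_distrib, ← Finset.sum_add_distrib]
      refine Finset.sum_congr rfl fun i _ => ?_
      rw [← zdn_or_fun]
      have h := key_count (m i) (z i) (z' i)
      have h2 : (diffCount (m i) (zdn (m i) fun x => z i x && z' i x)
            (fun x => z i x && z' i x) : ℝ)
          + (diffCount (m i) (zdn (m i) fun x => z i x && z' i x)
            (fun x => zdn (m i) (z i) x && zdn (m i) (z' i) x) : ℝ)
          + (diffCount (m i) (zdn (m i) fun x => z i x || z' i x)
            (fun x => z i x || z' i x) : ℝ)
          = (diffCount (m i) (zdn (m i) (z i)) (z i) : ℝ)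
          + (diffCount (m i) (zdn (m i) (z' i)) (z' i) : ℝ) := by exact_mod_cast h
      linear_combination (B i) * h2
    linarith
  · intro z hmin i
    have key := hmin (fun i => zdn (m i) (z i))
    simp only [Hext, zdn_idem, diffCount_self, Nat.cast_zero, mul_zero,
      Finset.sum_const_zero, add_zero] at key
    have hsumle : ∑ j, B j * (diffCount (m j) (zdn (m j) (z j)) (z j) : ℝ) ≤ 0 := by
      linarith
    have hnn : ∀ j ∈ Finset.univ, (0:ℝ) ≤ B j * (diffCount (m j) (zdn (m j) (z j)) (z j) : ℝ) :=
      fun j _ => mul_nonneg (hB j).le (Nat.cast_nonneg _)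
    have hsum0 : ∑ j, B j * (diffCount (m j) (zdn (m j) (z j)) (z j) : ℝ) = 0 :=
      le_antisymm hsumle (Finset.sum_nonneg hnn)
    have hz0 := (Finset.sum_eq_zero_iff_of_nonneg hnn).1 hsum0 i (Finset.mem_univ i)
    have hdc : diffCount (m i) (zdn (m i) (z i)) (z i) = 0 := by
      rcases mul_eq_zero.1 hz0 with h | h
      · exact absurd h (ne_of_gt (hB i))
      · exact_mod_cast h
    have hfilter : ((Finset.range (m i)).filter
        fun x => zdn (m i) (z i) x ≠ z i x) = ∅ := Finset.card_eq_zero.1 hdc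
    have heq : ∀ x < m i, zdn (m i) (z i) x = z i x := by
      intro x hx
      by_contra hne
      have hmem : x ∈ (Finset.range (m i)).filter
          (fun x => zdn (m i) (z i) x ≠ z i x) := by
        simp [Finset.mem_filter, Finset.mem_range, hx, hne]
      rw [hfilter] at hmem
      exact absurd hmem (Finset.notMem_empty x)
    intro x y hxy hy
    rw [← heq x (lt_of_le_of_lt hxy hy), ← heq y hy]
    exact monovec_zdn (m i) (z i) x y hxy hy
end
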